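/- Let (X₁, X₂) be a pair of symmetric random variables whose cumulative distribution functions F_{X_i} (i = 1, 2) are continuous and strictly increasing on (F_{X_i}^{-1+}(0), F_{X_i}^{-1}(1)), and suppose X₂ ≤_disp X₁. Then for every p ∈ (0,1), the counter-monotonic sum S⁻ satisfies WT_p[S⁻] = WT_p[X₁] + WT_{1−p}[X₂]. -/

import Mathlib

open MeasureTheory ProbabilityTheory Set

noncomputable section

variable {Ω : Type*} [MeasurableSpace Ω]

/-- The cumulative distribution function of the random variable `X` under `P`. -/
def rvCdf (P : Measure Ω) (X : Ω → ℝ) : ℝ → ℝ := fun x => (P {ω | X ω ≤ x}).toReal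

/-- The survival function `x ↦ P(X > x)`. -/
def rvSurv (P : Measure Ω) (X : Ω → ℝ) : ℝ → ℝ := fun x => (P {ω | x < X ω}).toReal

/-- The left inverse `F⁻¹(p) = inf {x | F x ≥ p}` of a cdf `F`. -/
def leftInv (F : ℝ → ℝ) (p : ℝ) : ℝ := sInf {x | p ≤ F x}

/-- The right inverse `F⁻¹⁺(p) = sup {x | F x ≤ p}` of a cdf `F`. -/
def rightInv (F : ℝ → ℝ) (p : ℝ) : ℝ := sSup {x | F x ≤ p}

/-- `g : [0,1] → [0,1]` is a distortion function: nondecreasing with `g 0 = 0`, `g 1 = 1`. -/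
def IsDistortion (g : ℝ → ℝ) : Prop :=
  MonotoneOn g (Icc 0 1) ∧ g 0 = 0 ∧ g 1 = 1 ∧ ∀ q ∈ Icc (0:ℝ) 1, g q ∈ Icc (0:ℝ) 1

/-- The dual distortion function `ḡ(q) = 1 - g(1 - q)`. -/
def dualDistortion (g : ℝ → ℝ) : ℝ → ℝ := fun q => 1 - g (1 - q)

/-- The distortion risk measure
`ρ_g[X] = -∫_{-∞}^0 (1 - g(P(X > x))) dx + ∫_0^∞ g(P(X > x)) dx`. -/
def rho (P : Measure Ω) (g : ℝ → ℝ) (X : Ω → ℝ) : ℝ :=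
  (- ∫ x in Iio (0:ℝ), (1 - g (rvSurv P X x))) + ∫ x in Ioi (0:ℝ), g (rvSurv P X x)

/-- The two integrals defining the distortion risk measure `ρ_g[X]` are finite. -/
def RhoFinite (P : Measure Ω) (g : ℝ → ℝ) (X : Ω → ℝ) : Prop :=
  IntegrableOn (fun x => 1 - g (rvSurv P X x)) (Iio (0:ℝ)) volume ∧
  IntegrableOn (fun x => g (rvSurv P X x)) (Ioi (0:ℝ)) volume

/-- `U` is uniformly distributed on `[0,1]`. -/
def IsUniform01 (P : Measure Ω) (U : Ω → ℝ) : Prop :=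
  Measurable U ∧ Measure.map U P = volume.restrict (Icc (0:ℝ) 1)

/-- The counter-monotonic sum `S⁻ = F_{X₁}⁻¹(U) + F_{X₂}⁻¹(1 - U)`. -/
def cmSum (P : Measure Ω) (X₁ X₂ : Ω → ℝ) (U : Ω → ℝ) : Ω → ℝ :=
  fun ω => leftInv (rvCdf P X₁) (U ω) + leftInv (rvCdf P X₂) (1 - U ω)

/-- `X` is symmetric: for some `m`, `P(X ≤ m - x) = P(X ≥ m + x)` for all `x`. -/
def IsSymmetricRV (P : Measure Ω) (X : Ω → ℝ) : Prop :=
  ∃ m : ℝ, ∀ x : ℝ, P {ω | X ω ≤ m - x} = P {ω | m + x ≤ X ω}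

/-- Dispersive order `X ≤_disp Y`. -/
def DispLE (P : Measure Ω) (X Y : Ω → ℝ) : Prop :=
  ∀ u v : ℝ, 0 < v → v ≤ u → u < 1 →
    leftInv (rvCdf P X) u - leftInv (rvCdf P X) v ≤
      leftInv (rvCdf P Y) u - leftInv (rvCdf P Y) v

/-- The cdf of `X` is continuous and strictly increasing on `(F⁻¹⁺(0), F⁻¹(1))`. -/
def CdfRegular (P : Measure Ω) (X : Ω → ℝ) : Prop :=
  ContinuousOn (rvCdf P X) (Ioo (rightInv (rvCdf P X) 0) (leftInv (rvCdf P X) 1)) ∧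
  StrictMonoOn (rvCdf P X) (Ioo (rightInv (rvCdf P X) 0) (leftInv (rvCdf P X) 1))

/-- Value-at-Risk `VaR_p[X] = F_X⁻¹(p)`. -/
def VaR (P : Measure Ω) (X : Ω → ℝ) (p : ℝ) : ℝ := leftInv (rvCdf P X) p

/-- Tail-Value-at-Risk `TVaR_p[X] = (1/(1-p)) ∫_p^1 F_X⁻¹(q) dq`. -/
def TVaR (P : Measure Ω) (X : Ω → ℝ) (p : ℝ) : ℝ :=
  (1 - p)⁻¹ * ∫ q in p..1, leftInv (rvCdf P X) q

/-- Left-Tail-Value-at-Risk `LTVaR_p[X] = (1/p) ∫_0^p F_X⁻¹(q) dq`. -/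
def LTVaR (P : Measure Ω) (X : Ω → ℝ) (p : ℝ) : ℝ :=
  p⁻¹ * ∫ q in (0:ℝ)..p, leftInv (rvCdf P X) q

/-- The standard normal cdf `Φ`. -/
def stdNormCdf : ℝ → ℝ := fun x => ((gaussianReal 0 1) (Iic x)).toReal

/-- The inverse `Φ⁻¹` of the standard normal cdf. -/
def stdNormInv : ℝ → ℝ := fun p => sInf {x | p ≤ stdNormCdf x}

/-- The Wang transform distortion function at level `p`. -/
def wangG (p : ℝ) : ℝ → ℝ := fun q => stdNormCdf (stdNormInv q + stdNormInv p)

/-- The Wang transform risk measure at level `p`. -/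
def WT (P : Measure Ω) (X : Ω → ℝ) (p : ℝ) : ℝ := rho P (wangG p) X

/-- `X ~ N(μ, σ²)`. -/
def IsNormalRV (P : Measure Ω) (X : Ω → ℝ) (μ σ : ℝ) : Prop :=
  Measurable X ∧ Measure.map X P = gaussianReal μ (⟨σ ^ 2, sq_nonneg σ⟩ : NNReal)

/-- `X ~ LN(μ, σ²)`, i.e. `X` is distributed as `exp Z` with `Z ~ N(μ, σ²)`. -/
def IsLogNormalRV (P : Measure Ω) (X : Ω → ℝ) (μ σ : ℝ) : Prop :=
  Measurable X ∧
    Measure.map X P = Measure.map Real.exp (gaussianReal μ (⟨σ ^ 2, sq_nonneg σ⟩ : NNReal))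

/-- `X ~ Student(ν)`: density proportional to `(1 + x²/ν)^(-(ν+1)/2)`. -/
def IsStudentRV (P : Measure Ω) (X : Ω → ℝ) (ν : ℝ) : Prop :=
  Measurable X ∧ ∃ c : ℝ, 0 < c ∧
    Measure.map X P =
      volume.withDensity (fun x => ENNReal.ofReal (c * (1 + x ^ 2 / ν) ^ (-((ν + 1) / 2))))

/-- Extension of a distortion function to `ℝ` by constants. -/
def gExt (g : ℝ → ℝ) : ℝ → ℝ := fun q => if q ≤ 0 then 0 else if 1 ≤ q then 1 else g q

open Classical in
/-- The Lebesgue–Stieltjes measure `dg` associated with (the right-continuous modification of)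
the extension of a distortion function `g` to `ℝ`. -/
def lsMeasure (g : ℝ → ℝ) : Measure ℝ :=
  if h : Monotone (gExt g) then h.stieltjesFunction.measure else 0

/-!
By the symmetry of `X₂`, `F₂⁻¹(1 - u) = 2m - F₂⁻¹⁺(u)`, and the left and right inverses agree
outside a countable set; hence `S⁻ = h(U)` almost surely with `h = F₁⁻¹ - F₂⁻¹ + 2m`, which is
nondecreasing on `(0, 1)` because `X₂ ≤_disp X₁`. For a nondecreasing `h` on `(0, 1)`
the survival function of `h ∘ g_p` under Lebesgue measure is `g_p` applied to that of `h`
(`g_p` is an increasing bijection of `(0, 1)` with inverse `g_{1-p}`), so the layer-cake formula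
gives `WT_p[h(U)] = ∫₀¹ h(g_p(u)) du`. The same holds for `X₁ = F₁⁻¹(U)` and `X₂ = F₂⁻¹(U)` in
law. Finally the substitution `u ↦ 1 - u` and `g_p(1 - u) = 1 - g_{1-p}(u)` turn
`∫₀¹ (2m - F₂⁻¹(g_p(u))) du` into `∫₀¹ F₂⁻¹(g_{1-p}(u)) du = WT_{1-p}[X₂]`.
-/

open Filter Topology

section Quantile

variable (μ : Measure ℝ) {u v x y : ℝ}

lemma leftInv_cdf_le_iff (hu : u ∈ Ioo 0 1) : leftInv (cdf μ) u ≤ x ↔ u ≤ cdf μ x := by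
  have hne : {y | u ≤ cdf μ y}.Nonempty :=
    ((tendsto_order.1 (tendsto_cdf_atTop μ)).1 u hu.2).exists.imp fun _ h => h.le
  have hbdd : BddBelow {y | u ≤ cdf μ y} := by
    obtain ⟨z, hz⟩ := ((tendsto_order.1 (tendsto_cdf_atBot μ)).2 u hu.1).exists
    exact ⟨z, fun y hy => le_of_not_gt fun hyz => ((monotone_cdf μ hyz.le).trans_lt hz).not_ge hy⟩
  refine ⟨fun h => ?_, fun h => csInf_le hbdd h⟩
  refine ge_of_tendsto ((cdf μ).right_continuous x |>.mono Ioi_subset_Ici_self)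
    (eventually_nhdsWithin_of_forall fun y (hy : x < y) => ?_)
  obtain ⟨t, ht, hty⟩ := exists_lt_of_csInf_lt hne (h.trans_lt hy)
  exact ht.trans (monotone_cdf μ hty.le)

lemma lt_leftInv_cdf_iff (hu : u ∈ Ioo 0 1) : x < leftInv (cdf μ) u ↔ cdf μ x < u := by
  simpa only [not_le] using (leftInv_cdf_le_iff μ hu).not

lemma monotoneOn_leftInv_cdf : MonotoneOn (leftInv (cdf μ)) (Ioo 0 1) := fun _ hu _ hv huv =>
  (leftInv_cdf_le_iff μ hu).2 <| huv.trans <| (leftInv_cdf_le_iff μ hv).1 le_rfl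

lemma cdf_leftInv_cdf (hc : Continuous (cdf μ)) (hu : u ∈ Ioo 0 1) :
    cdf μ (leftInv (cdf μ) u) = u := by
  refine le_antisymm ?_ ((leftInv_cdf_le_iff μ hu).1 le_rfl)
  exact le_of_tendsto ((hc.tendsto _).mono_left nhdsWithin_le_nhds :
      Tendsto _ (𝓝[<] (leftInv (cdf μ) u)) _)
    (eventually_nhdsWithin_of_forall fun y hy => ((lt_leftInv_cdf_iff μ hu).1 hy).le)

lemma leftInv_cdf_cdf (hs : StrictMono (cdf μ)) (hx : cdf μ x ∈ Ioo 0 1) :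
    leftInv (cdf μ) (cdf μ x) = x :=
  le_antisymm ((leftInv_cdf_le_iff μ hx).2 le_rfl)
    (not_lt.1 fun h => (hs h).not_ge ((leftInv_cdf_le_iff μ hx).1 le_rfl))

lemma le_rightInv_cdf_iff (hu : u ∈ Ioo 0 1) :
    y ≤ rightInv (cdf μ) u ↔ ∀ z < y, cdf μ z ≤ u := by
  have hne : {y | cdf μ y ≤ u}.Nonempty :=
    ((tendsto_order.1 (tendsto_cdf_atBot μ)).2 u hu.1).exists.imp fun _ h => h.le
  have hbdd : BddAbove {y | cdf μ y ≤ u} := by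
    obtain ⟨z, hz⟩ := ((tendsto_order.1 (tendsto_cdf_atTop μ)).1 u hu.2).exists
    exact ⟨z, fun y hy => le_of_not_gt fun hzy => (hz.trans_le (monotone_cdf μ hzy.le)).not_ge hy⟩
  refine ⟨fun h z hz => ?_, fun h => le_of_forall_lt fun z hz => ?_⟩
  · obtain ⟨t, ht, hzt⟩ := exists_lt_of_lt_csSup hne (hz.trans_le h)
    exact (monotone_cdf μ hzt.le).trans ht
  · obtain ⟨t, hzt, hty⟩ := exists_between hz
    exact hzt.trans_le (le_csSup hbdd (h t hty))

lemma leftInv_cdf_le_rightInv_cdf (hu : u ∈ Ioo 0 1) :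
    leftInv (cdf μ) u ≤ rightInv (cdf μ) u :=
  (le_rightInv_cdf_iff μ hu).2 fun _ hz => ((lt_leftInv_cdf_iff μ hu).1 hz).le

lemma rightInv_cdf_le_leftInv_cdf (hu : u ∈ Ioo 0 1) (hv : v ∈ Ioo 0 1) (huv : u < v) :
    rightInv (cdf μ) u ≤ leftInv (cdf μ) v := by
  refine le_of_forall_lt fun y hy => (lt_leftInv_cdf_iff μ hv).2 ?_
  obtain ⟨z, hyz, hz⟩ := exists_between hy
  exact ((le_rightInv_cdf_iff μ hu).1 hz.le y hyz).trans_lt huv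

lemma countable_leftInv_cdf_ne_rightInv_cdf :
    {u ∈ Ioo (0:ℝ) 1 | leftInv (cdf μ) u ≠ rightInv (cdf μ) u}.Countable := by
  refine PairwiseDisjoint.countable_of_isOpen (s := fun u => Ioo (leftInv (cdf μ) u)
    (rightInv (cdf μ) u)) ?_ (fun _ _ => isOpen_Ioo)
    fun u hu => nonempty_Ioo.2 ((leftInv_cdf_le_rightInv_cdf μ hu.1).lt_of_ne hu.2)
  intro u hu v hv huv
  wlog h : u < v generalizing u v
  · exact (this hv hu huv.symm (huv.lt_or_gt.resolve_left h)).symm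
  exact Ioo_disjoint_Ioo.2 <| (min_le_left _ _).trans <|
    (rightInv_cdf_le_leftInv_cdf μ hu.1 hv.1 h).trans (le_max_right _ _)

variable [IsProbabilityMeasure μ]

lemma continuous_cdf [NullSingletonClass μ] : Continuous (cdf μ) := by
  refine continuous_iff_continuousAt.2 fun x => ?_
  rw [(monotone_cdf μ).continuousAt_iff_leftLim_eq_rightLim, StieltjesFunction.rightLim_eq]
  have h := (cdf μ).measure_singleton x
  rw [measure_cdf, measure_singleton, eq_comm, ENNReal.ofReal_eq_zero, sub_nonpos] at h
  exact le_antisymm ((monotone_cdf μ).leftLim_le le_rfl) h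

lemma measureReal_Iio_le_iff : μ.real (Iio y) ≤ u ↔ ∀ z < y, cdf μ z ≤ u := by
  have hlim : μ.real (Iio y) = Function.leftLim (cdf μ) y := by
    have h := (cdf μ).measure_Iio (tendsto_cdf_atBot μ) y
    rw [measure_cdf, sub_zero] at h
    rw [measureReal_def, h,
      ENNReal.toReal_ofReal ((cdf_nonneg μ _).trans ((monotone_cdf μ).le_leftLim (sub_one_lt y)))]
  rw [hlim, (monotone_cdf μ).leftLim_eq_sSup, csSup_le_iff ⟨1, ?_⟩ (nonempty_Iio.image _)]
  · simp only [mem_image, mem_Iio, forall_exists_index, and_imp, forall_apply_eq_imp_iff₂]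
  · rintro _ ⟨z, -, rfl⟩
    exact cdf_le_one μ z

variable {m : ℝ}

lemma leftInv_cdf_one_sub (hsym : ∀ x, μ (Iic (m - x)) = μ (Ici (m + x))) (hu : u ∈ Ioo 0 1) :
    leftInv (cdf μ) (1 - u) = 2 * m - rightInv (cdf μ) u := by
  have hu' : 1 - u ∈ Ioo (0:ℝ) 1 := ⟨sub_pos.2 hu.2, sub_lt_self _ hu.1⟩
  refine eq_of_forall_ge_iff fun x => ?_
  have hx : cdf μ x = 1 - μ.real (Iio (2 * m - x)) := by
    have h := hsym (m - x)
    rw [sub_sub_cancel, show m + (m - x) = 2 * m - x by ring] at h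
    rw [cdf_eq_real, measureReal_def, h, ← compl_Iio, ← measureReal_def,
      probReal_compl_eq_one_sub measurableSet_Iio]
  rw [leftInv_cdf_le_iff μ hu', hx, sub_le_comm, sub_sub_cancel, measureReal_Iio_le_iff,
    ← le_rightInv_cdf_iff μ hu, sub_le_comm]

lemma countable_leftInv_cdf_one_sub_ne (hsym : ∀ x, μ (Iic (m - x)) = μ (Ici (m + x))) :
    {u ∈ Ioo (0:ℝ) 1 | leftInv (cdf μ) (1 - u) ≠ 2 * m - leftInv (cdf μ) u}.Countable := by
  refine (countable_leftInv_cdf_ne_rightInv_cdf μ).mono ?_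
  rintro u ⟨hu, hne⟩
  refine ⟨hu, fun h => hne ?_⟩
  rw [leftInv_cdf_one_sub μ hsym hu, h]

end Quantile

section StandardNormal

local notation "𝒩" => gaussianReal 0 1

lemma stdNormCdf_eq_cdf : stdNormCdf = cdf 𝒩 := funext fun x => (cdf_eq_real _ x).symm

lemma continuous_stdNormCdf : Continuous stdNormCdf := by
  have := nullSingletonClass_gaussianReal (μ := 0) one_ne_zero
  rw [stdNormCdf_eq_cdf]
  exact continuous_cdf _

lemma strictMono_stdNormCdf : StrictMono stdNormCdf := by
  intro x y hxy
  have hpos : 0 < 𝒩 (Ioc x y) := pos_of_ne_zero fun h => by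
    have := gaussianReal_absolutelyContinuous' 0 one_ne_zero h
    rw [Real.volume_Ioc, ENNReal.ofReal_eq_zero] at this
    linarith
  have h := (cdf 𝒩).measure_Ioc x y
  rw [measure_cdf, ← ENNReal.ofReal_toReal (measure_ne_top _ _), ENNReal.ofReal_eq_ofReal_iff
    ENNReal.toReal_nonneg (sub_nonneg.2 (monotone_cdf _ hxy.le))] at h
  rw [stdNormCdf_eq_cdf, ← sub_pos, ← h]
  exact ENNReal.toReal_pos hpos.ne' (measure_ne_top _ _)

lemma stdNormCdf_mem_Ioo (x : ℝ) : stdNormCdf x ∈ Ioo 0 1 := by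
  have h₀ : 0 ≤ stdNormCdf (x - 1) := stdNormCdf_eq_cdf ▸ cdf_nonneg _ _
  have h₁ : stdNormCdf (x + 1) ≤ 1 := stdNormCdf_eq_cdf ▸ cdf_le_one _ _
  exact ⟨h₀.trans_lt (strictMono_stdNormCdf (sub_one_lt x)),
    (strictMono_stdNormCdf (lt_add_one x)).trans_le h₁⟩

lemma stdNormCdf_neg (x : ℝ) : stdNormCdf (-x) = 1 - stdNormCdf x := by
  have := nullSingletonClass_gaussianReal (μ := 0) one_ne_zero
  have h : 𝒩 (Iic (-x)) = 𝒩 (Ici x) := by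
    conv_lhs => rw [← neg_zero, ← gaussianReal_map_neg]
    rw [Measure.map_apply measurable_neg measurableSet_Iic]
    congr 1
    ext y
    simp
  rw [stdNormCdf, h, ← measureReal_def, ← compl_Iio, probReal_compl_eq_one_sub measurableSet_Iio,
    measureReal_congr Iio_ae_eq_Iic]
  rfl

lemma stdNormInv_eq_leftInv : stdNormInv = leftInv (cdf 𝒩) := by
  rw [← stdNormCdf_eq_cdf]
  rfl

lemma stdNormCdf_stdNormInv {q : ℝ} (hq : q ∈ Ioo 0 1) : stdNormCdf (stdNormInv q) = q := by
  rw [stdNormInv_eq_leftInv, stdNormCdf_eq_cdf]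
  exact cdf_leftInv_cdf _ (stdNormCdf_eq_cdf ▸ continuous_stdNormCdf) hq

lemma stdNormInv_stdNormCdf (x : ℝ) : stdNormInv (stdNormCdf x) = x := by
  rw [stdNormInv_eq_leftInv, stdNormCdf_eq_cdf]
  exact leftInv_cdf_cdf _ (stdNormCdf_eq_cdf ▸ strictMono_stdNormCdf)
    (stdNormCdf_eq_cdf ▸ stdNormCdf_mem_Ioo x)

lemma stdNormInv_one_sub {q : ℝ} (hq : q ∈ Ioo 0 1) : stdNormInv (1 - q) = -stdNormInv q := by
  rw [← stdNormInv_stdNormCdf (-stdNormInv q), stdNormCdf_neg, stdNormCdf_stdNormInv hq]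

lemma strictMonoOn_stdNormInv : StrictMonoOn stdNormInv (Ioo 0 1) := fun u hu v hv huv =>
  strictMono_stdNormCdf.lt_iff_lt.1 <| by rwa [stdNormCdf_stdNormInv hu, stdNormCdf_stdNormInv hv]

lemma stdNormInv_zero : stdNormInv 0 = 0 := by
  have h : {x | (0:ℝ) ≤ stdNormCdf x} = univ :=
    eq_univ_of_forall fun x => (stdNormCdf_mem_Ioo x).1.le
  rw [stdNormInv, h, Real.sInf_of_not_bddBelow not_bddBelow_univ]

lemma stdNormInv_one : stdNormInv 1 = 0 := by
  have h : {x | (1:ℝ) ≤ stdNormCdf x} = ∅ :=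
    eq_empty_of_forall_notMem fun x hx => (stdNormCdf_mem_Ioo x).2.not_ge hx
  rw [stdNormInv, h, Real.sInf_empty]

end StandardNormal

section WangTransform

variable {p : ℝ}

lemma wangG_mem_Ioo (p q : ℝ) : wangG p q ∈ Ioo 0 1 := stdNormCdf_mem_Ioo _

lemma strictMonoOn_wangG (p : ℝ) : StrictMonoOn (wangG p) (Ioo 0 1) := fun _ hu _ hv huv =>
  strictMono_stdNormCdf (add_lt_add_left (strictMonoOn_stdNormInv hu hv huv) _)

lemma wangG_zero (hp : p ∈ Ioo 0 1) : wangG p 0 = p := by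
  rw [wangG, stdNormInv_zero, zero_add, stdNormCdf_stdNormInv hp]

lemma wangG_one (hp : p ∈ Ioo 0 1) : wangG p 1 = p := by
  rw [wangG, stdNormInv_one, zero_add, stdNormCdf_stdNormInv hp]

lemma wangG_one_sub (hp : p ∈ Ioo 0 1) {u : ℝ} (hu : u ∈ Ioo 0 1) :
    wangG p (1 - u) = 1 - wangG (1 - p) u := by
  rw [wangG, wangG, stdNormInv_one_sub hu, stdNormInv_one_sub hp, ← stdNormCdf_neg]
  ring_nf

lemma wangG_wangG_one_sub (hp : p ∈ Ioo 0 1) {a : ℝ} (ha : a ∈ Ioo 0 1) :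
    wangG p (wangG (1 - p) a) = a := by
  rw [wangG, wangG, stdNormInv_stdNormCdf, stdNormInv_one_sub hp, neg_add_cancel_right,
    stdNormCdf_stdNormInv ha]

end WangTransform

section Survival

variable {P : Measure Ω} {X Y : Ω → ℝ}

lemma rvSurv_eq_one_sub_rvCdf [IsProbabilityMeasure P] (hX : AEMeasurable X P) (x : ℝ) :
    rvSurv P X x = 1 - rvCdf P X x := by
  have h : {ω | x < X ω} = (X ⁻¹' Iic x)ᶜ := by ext; simp
  rw [rvSurv, rvCdf, h, ← measureReal_def,
    probReal_compl_eq_one_sub₀ (hX.nullMeasurable measurableSet_Iic)]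
  rfl

lemma rvCdf_eq_cdf_map [IsProbabilityMeasure P] (hX : AEMeasurable X P) :
    rvCdf P X = cdf (P.map X) := by
  have := Measure.isProbabilityMeasure_map hX
  ext x
  rw [cdf_eq_real, measureReal_def, Measure.map_apply₀ hX measurableSet_Iic.nullMeasurableSet]
  rfl

lemma rvSurv_comp {U : Ω → ℝ} {h : ℝ → ℝ} (hU : AEMeasurable U P)
    (hh : AEMeasurable h (P.map U)) : rvSurv P (h ∘ U) = rvSurv (P.map U) h := by
  ext x
  exact congrArg ENNReal.toReal (Measure.map_apply₀ hU (hh.nullMeasurable measurableSet_Ioi)).symm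

lemma rvSurv_congr_ae (h : X =ᵐ[P] Y) : rvSurv P X = rvSurv P Y := by
  ext x
  refine congrArg ENNReal.toReal (measure_congr ?_)
  filter_upwards [h] with ω hω
  exact congrArg (x < ·) hω

lemma integrable_and_integral_eq_of_lintegral_eq {ν : Measure ℝ} {f : Ω → ℝ} {g : ℝ → ℝ}
    (hf : AEMeasurable f P) (hf₀ : 0 ≤ᵐ[P] f) (hg : Integrable g ν) (hg₀ : 0 ≤ᵐ[ν] g)
    (h : ∫⁻ ω, ENNReal.ofReal (f ω) ∂P = ∫⁻ x, ENNReal.ofReal (g x) ∂ν) :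
    Integrable f P ∧ ∫ ω, f ω ∂P = ∫ x, g x ∂ν := by
  rw [← ofReal_integral_eq_lintegral_ofReal hg hg₀] at h
  refine ⟨⟨hf.aestronglyMeasurable,
    (hasFiniteIntegral_iff_ofReal hf₀).2 (h ▸ ENNReal.ofReal_lt_top)⟩, ?_⟩
  rw [integral_eq_lintegral_of_nonneg_ae hf₀ hf.aestronglyMeasurable, h,
    ENNReal.toReal_ofReal (integral_nonneg_of_ae hg₀)]

lemma integrable_max_zero_and_integral_eq [IsFiniteMeasure P] (hY : AEMeasurable Y P)
    (h : IntegrableOn (rvSurv P Y) (Ioi 0)) :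
    Integrable (fun ω => max (Y ω) 0) P ∧ ∫ ω, max (Y ω) 0 ∂P = ∫ x in Ioi 0, rvSurv P Y x := by
  have hpos : AEMeasurable (fun ω => max (Y ω) 0) P := hY.max aemeasurable_const
  have hpos₀ : 0 ≤ᵐ[P] fun ω => max (Y ω) 0 := ae_of_all _ fun _ => le_max_right _ _
  refine integrable_and_integral_eq_of_lintegral_eq hpos hpos₀ h
    (ae_of_all _ fun _ => ENNReal.toReal_nonneg) ?_
  rw [lintegral_eq_lintegral_meas_lt P hpos₀ hpos]
  refine setLIntegral_congr_fun measurableSet_Ioi fun x (hx : 0 < x) => ?_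
  have hset : {ω | x < max (Y ω) 0} = {ω | x < Y ω} := by ext; simp [hx.not_gt]
  rw [hset, rvSurv, ENNReal.ofReal_toReal (measure_ne_top _ _)]

lemma integrable_max_neg_zero_and_integral_eq [IsProbabilityMeasure P] (hY : AEMeasurable Y P)
    (h : IntegrableOn (fun x => 1 - rvSurv P Y x) (Iio 0)) :
    Integrable (fun ω => max (-Y ω) 0) P ∧
      ∫ ω, max (-Y ω) 0 ∂P = ∫ x in Iio 0, (1 - rvSurv P Y x) := by
  have hneg : AEMeasurable (fun ω => max (-Y ω) 0) P := hY.neg.max aemeasurable_const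
  have hneg₀ : 0 ≤ᵐ[P] fun ω => max (-Y ω) 0 := ae_of_all _ fun _ => le_max_right _ _
  have h' : IntegrableOn (fun t => 1 - rvSurv P Y (-t)) (Ioi 0) := by
    have := ((Measure.measurePreserving_neg volume).integrableOn_comp_preimage
      (Homeomorph.neg ℝ).measurableEmbedding).2 h
    rwa [neg_preimage, neg_Iio, neg_zero] at this
  have hcomp := integral_comp_neg_Ioi 0 fun x => 1 - rvSurv P Y x
  rw [neg_zero] at hcomp
  rw [← integral_Iic_eq_integral_Iio, ← hcomp]
  refine integrable_and_integral_eq_of_lintegral_eq hneg hneg₀ h'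
    (ae_of_all _ fun _ => sub_nonneg.2 measureReal_le_one) ?_
  rw [lintegral_eq_lintegral_meas_le P hneg₀ hneg]
  refine setLIntegral_congr_fun measurableSet_Ioi fun t (ht : 0 < t) => ?_
  have hset : {ω | t ≤ max (-Y ω) 0} = {ω | Y ω ≤ -t} := by
    ext; simp [ht.not_ge, le_neg]
  rw [hset, rvSurv_eq_one_sub_rvCdf hY, sub_sub_cancel, rvCdf,
    ENNReal.ofReal_toReal (measure_ne_top _ _)]

lemma integrable_and_integral_eq_rho_id [IsProbabilityMeasure P] (hY : AEMeasurable Y P)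
    (hfin : RhoFinite P id Y) : Integrable Y P ∧ ∫ ω, Y ω ∂P = rho P id Y := by
  obtain ⟨hipos, hepos⟩ := integrable_max_zero_and_integral_eq hY hfin.2
  obtain ⟨hineg, heneg⟩ := integrable_max_neg_zero_and_integral_eq hY hfin.1
  have hsplit : (fun ω => max (Y ω) 0 - max (-Y ω) 0) = Y :=
    funext fun ω => max_zero_sub_max_neg_zero_eq_self (Y ω)
  refine ⟨hsplit ▸ hipos.sub hineg, ?_⟩
  conv_lhs => rw [← hsplit]
  rw [integral_sub hipos hineg, hepos, heneg, rho, neg_add_eq_sub]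
  rfl

variable {p : ℝ}

lemma antitone_rvSurv [IsFiniteMeasure P] : Antitone (rvSurv P Y) := fun _ _ hxy =>
  measureReal_mono fun _ (h : _ < Y _) => hxy.trans_lt h

lemma rvSurv_ne_zero_of_integrableOn_wangG [IsFiniteMeasure P] (hp : p ∈ Ioo 0 1)
    (h : IntegrableOn (fun x => wangG p (rvSurv P Y x)) (Ioi 0)) {x : ℝ} (hx : 0 < x) :
    rvSurv P Y x ≠ 0 := fun h0 => by
  have hconst : IntegrableOn (fun _ => p) (Ici x) := by
    refine (h.mono_set fun y hy => hx.trans_le hy).congr_fun (fun y hy => ?_) measurableSet_Ici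
    have hy0 : rvSurv P Y y = 0 := le_antisymm (h0 ▸ antitone_rvSurv hy) ENNReal.toReal_nonneg
    simp only [hy0, wangG_zero hp]
  rcases (integrableOn_const_iff (C := p)).1 hconst with h | h
  · exact hp.1.ne' (enorm_eq_zero.1 h)
  · exact (Real.volume_Ici ▸ h).ne rfl

lemma rvSurv_ne_one_of_integrableOn_wangG [IsProbabilityMeasure P] (hp : p ∈ Ioo 0 1)
    (h : IntegrableOn (fun x => 1 - wangG p (rvSurv P Y x)) (Iio 0)) {x : ℝ} (hx : x < 0) :
    rvSurv P Y x ≠ 1 := fun h1 => by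
  have hconst : IntegrableOn (fun _ => 1 - p) (Iic x) := by
    refine (h.mono_set fun y hy => hy.trans_lt hx).congr_fun (fun y hy => ?_) measurableSet_Iic
    have hy1 : rvSurv P Y y = 1 := le_antisymm measureReal_le_one (h1 ▸ antitone_rvSurv hy)
    simp only [hy1, wangG_one hp]
  rcases (integrableOn_const_iff (C := 1 - p)).1 hconst with h | h
  · exact (sub_pos.2 hp.2).ne' (enorm_eq_zero.1 h)
  · exact (Real.volume_Iic ▸ h).ne rfl

/-- Since `stdNormInv` takes the junk value `0` at `0` and `1`, `wangG p 0 = wangG p 1 = p`: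
the integrals in `rho` diverge as soon as the survival function reaches `0` or `1`. -/
lemma rvSurv_mem_Ioo_of_rhoFinite [IsProbabilityMeasure P] (hp : p ∈ Ioo 0 1)
    (hfin : RhoFinite P (wangG p) Y) {x : ℝ} (hx : x ≠ 0) : rvSurv P Y x ∈ Ioo 0 1 := by
  have hne0 := fun {x} => rvSurv_ne_zero_of_integrableOn_wangG hp hfin.2 (x := x)
  have hne1 := fun {x} => rvSurv_ne_one_of_integrableOn_wangG hp hfin.1 (x := x)
  rcases hx.lt_or_gt with hx | hx
  · exact ⟨(ENNReal.toReal_nonneg.lt_of_ne (hne0 one_pos).symm).trans_le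
      (antitone_rvSurv (hx.trans one_pos).le), measureReal_le_one.lt_of_ne (hne1 hx)⟩
  · exact ⟨ENNReal.toReal_nonneg.lt_of_ne (hne0 hx).symm, (antitone_rvSurv
      (neg_one_lt_zero.trans hx).le).trans_lt (measureReal_le_one.lt_of_ne (hne1 neg_one_lt_zero))⟩

end Survival

local notation "𝕌" => (volume.restrict (Ioo (0:ℝ) 1) : Measure ℝ)

instance : IsProbabilityMeasure 𝕌 := ⟨by simp⟩

section UnitInterval

variable {w : ℝ → ℝ} {p x a : ℝ}

lemma MonotoneOn.exists_Ioo_subset_superlevel_subset_Icc (hw : MonotoneOn w (Ioo 0 1)) (x : ℝ) :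
    ∃ a ∈ Icc (0:ℝ) 1, Ioo a 1 ⊆ {u | x < w u} ∩ Ioo 0 1 ∧ {u | x < w u} ∩ Ioo 0 1 ⊆ Icc a 1 := by
  set T := {u | x < w u} ∩ Ioo 0 1
  have hbdd : BddBelow (insert 1 T) := ⟨0, by rintro u (rfl | hu); exacts [zero_le_one, hu.2.1.le]⟩
  refine ⟨sInf (insert 1 T), ⟨le_csInf (insert_nonempty _ _) ?_, csInf_le hbdd (mem_insert _ _)⟩,
    fun u hu => ?_, fun u hu => ⟨csInf_le hbdd (mem_insert_of_mem _ hu), hu.2.2.le⟩⟩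
  · rintro u (rfl | hu); exacts [zero_le_one, hu.2.1.le]
  · obtain ⟨t, ht, htu⟩ := exists_lt_of_csInf_lt (insert_nonempty _ _) hu.1
    rcases ht with rfl | ht
    · exact absurd hu.2 htu.not_gt
    · exact ⟨ht.1.trans_le (hw ht.2 ⟨ht.2.1.trans htu, hu.2⟩ htu.le), ht.2.1.trans htu, hu.2⟩

lemma rvSurv_eq_one_sub_of_Ioo_subset_of_subset_Icc (h₁ : Ioo a 1 ⊆ {u | x < w u} ∩ Ioo 0 1)
    (h₂ : {u | x < w u} ∩ Ioo 0 1 ⊆ Icc a 1) (ha : a ≤ 1) : rvSurv 𝕌 w x = 1 - a := by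
  have hvol : volume ({u | x < w u} ∩ Ioo 0 1) = ENNReal.ofReal (1 - a) :=
    le_antisymm (Real.volume_Icc ▸ measure_mono h₂) (Real.volume_Ioo ▸ measure_mono h₁)
  rw [rvSurv, Measure.restrict_apply' measurableSet_Ioo, hvol, ENNReal.toReal_ofReal (by linarith)]

lemma rvSurv_comp_wangG (hw : MonotoneOn w (Ioo 0 1)) (hp : p ∈ Ioo 0 1)
    (hs : rvSurv 𝕌 w x ∈ Ioo 0 1) : rvSurv 𝕌 (w ∘ wangG p) x = wangG p (rvSurv 𝕌 w x) := by
  obtain ⟨a, ha, h₁, h₂⟩ := hw.exists_Ioo_subset_superlevel_subset_Icc x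
  have hsa := rvSurv_eq_one_sub_of_Ioo_subset_of_subset_Icc h₁ h₂ ha.2
  have ha' : a ∈ Ioo (0:ℝ) 1 := by rw [hsa] at hs; exact ⟨by linarith [hs.2], by linarith [hs.1]⟩
  set b := wangG (1 - p) a
  have hg : ∀ u ∈ Ioo (0:ℝ) 1, (a < wangG p u ↔ b < u) ∧ (a ≤ wangG p u ↔ b ≤ u) := fun u hu => by
    rw [← wangG_wangG_one_sub hp ha']
    exact ⟨(strictMonoOn_wangG p).lt_iff_lt (wangG_mem_Ioo _ _) hu,
      (strictMonoOn_wangG p).le_iff_le (wangG_mem_Ioo _ _) hu⟩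
  have h₁' : Ioo b 1 ⊆ {u | x < (w ∘ wangG p) u} ∩ Ioo 0 1 := fun u hu => by
    have hu' : u ∈ Ioo (0:ℝ) 1 := ⟨(wangG_mem_Ioo _ _).1.trans hu.1, hu.2⟩
    exact ⟨(h₁ ⟨(hg u hu').1.2 hu.1, (wangG_mem_Ioo p u).2⟩).1, hu'⟩
  have h₂' : {u | x < (w ∘ wangG p) u} ∩ Ioo 0 1 ⊆ Icc b 1 := fun u hu =>
    ⟨(hg u hu.2).2.1 (h₂ ⟨hu.1, wangG_mem_Ioo p u⟩).1, hu.2.2.le⟩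
  rw [rvSurv_eq_one_sub_of_Ioo_subset_of_subset_Icc h₁' h₂' (wangG_mem_Ioo _ _).2.le, hsa,
    wangG_one_sub hp ha']

lemma rvSurv_leftInv_cdf (μ : Measure ℝ) [IsProbabilityMeasure μ] (x : ℝ) :
    rvSurv 𝕌 (leftInv (cdf μ)) x = 1 - cdf μ x := by
  refine rvSurv_eq_one_sub_of_Ioo_subset_of_subset_Icc (fun u hu => ?_) (fun u hu => ?_)
    (cdf_le_one μ x)
  · have hu' : u ∈ Ioo (0:ℝ) 1 := ⟨(cdf_nonneg μ x).trans_lt hu.1, hu.2⟩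
    exact ⟨(lt_leftInv_cdf_iff μ hu').2 hu.1, hu'⟩
  · exact ⟨((lt_leftInv_cdf_iff μ hu.2).1 hu.1).le, hu.2.2.le⟩

lemma integrable_and_WT_eq_integral {P : Measure Ω} [IsProbabilityMeasure P] {X : Ω → ℝ}
    (hw : MonotoneOn w (Ioo 0 1)) (hX : rvSurv P X = rvSurv 𝕌 w) (hp : p ∈ Ioo 0 1)
    (hfin : RhoFinite P (wangG p) X) :
    Integrable (fun u => w (wangG p u)) 𝕌 ∧ WT P X p = ∫ u in Ioo 0 1, w (wangG p u) := by
  rw [RhoFinite, hX] at hfin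
  have hv : MonotoneOn (w ∘ wangG p) (Ioo 0 1) :=
    hw.comp (strictMonoOn_wangG p).monotoneOn fun u _ => wangG_mem_Ioo p u
  have hsurv : ∀ x ≠ 0, rvSurv 𝕌 (w ∘ wangG p) x = wangG p (rvSurv 𝕌 w x) := fun x hx =>
    rvSurv_comp_wangG hw hp (rvSurv_mem_Ioo_of_rhoFinite hp hfin hx)
  have hIio : EqOn (fun x => 1 - id (rvSurv 𝕌 (w ∘ wangG p) x))
      (fun x => 1 - wangG p (rvSurv 𝕌 w x)) (Iio 0) := fun x hx =>
    congrArg (1 - ·) (hsurv x (ne_of_lt hx))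
  have hIoi : EqOn (fun x => id (rvSurv 𝕌 (w ∘ wangG p) x))
      (fun x => wangG p (rvSurv 𝕌 w x)) (Ioi 0) := fun x hx =>
    hsurv x (ne_of_gt hx)
  obtain ⟨hi, he⟩ := integrable_and_integral_eq_rho_id
    (aemeasurable_restrict_of_monotoneOn measurableSet_Ioo hv)
    ⟨hfin.1.congr_fun hIio.symm measurableSet_Iio, hfin.2.congr_fun hIoi.symm measurableSet_Ioi⟩
  refine ⟨hi, Eq.symm (he.trans ?_)⟩
  rw [WT, rho, rho, hX, setIntegral_congr_fun measurableSet_Iio hIio,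
    setIntegral_congr_fun measurableSet_Ioi hIoi]

lemma integral_two_mul_sub_comp_wangG {f : ℝ → ℝ} {m : ℝ} (hp : p ∈ Ioo 0 1)
    (hf : {u ∈ Ioo (0:ℝ) 1 | f (1 - u) ≠ 2 * m - f u}.Countable) :
    ∫ u in Ioo 0 1, (2 * m - f (wangG p u)) = ∫ u in Ioo 0 1, f (wangG (1 - p) u) := by
  have hflip (F : ℝ → ℝ) : ∫ u in Ioo 0 1, F (1 - u) = ∫ u in Ioo 0 1, F u := by
    simpa only [sub_zero, sub_self, intervalIntegral.integral_of_le zero_le_one,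
      integral_Ioc_eq_integral_Ioo] using
      intervalIntegral.integral_comp_sub_left (a := 0) (b := 1) F 1
  have hbad : Set.Countable
      {u ∈ Ioo (0:ℝ) 1 | wangG (1 - p) u ∈ {v ∈ Ioo (0:ℝ) 1 | f (1 - v) ≠ 2 * m - f v}} :=
    MapsTo.countable_of_injOn (fun _ hu => hu.2) ((strictMonoOn_wangG _).injOn.mono
      (sep_subset _ _)) hf
  rw [← hflip]
  refine setIntegral_congr_ae measurableSet_Ioo ?_
  filter_upwards [measure_eq_zero_iff_ae_notMem.1 (hbad.measure_zero volume)] with u hu hu₀₁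
  rw [wangG_one_sub hp hu₀₁]
  by_contra hne
  exact hu ⟨hu₀₁, wangG_mem_Ioo _ _, fun h => hne (by rw [h]; ring)⟩

end UnitInterval

section RandomVariable

variable {P : Measure Ω} {X : Ω → ℝ}

lemma monotoneOn_leftInv_rvCdf [IsProbabilityMeasure P] (hX : AEMeasurable X P) :
    MonotoneOn (leftInv (rvCdf P X)) (Ioo 0 1) :=
  rvCdf_eq_cdf_map hX ▸ monotoneOn_leftInv_cdf _

lemma rvSurv_leftInv_rvCdf [IsProbabilityMeasure P] (hX : AEMeasurable X P) :
    rvSurv 𝕌 (leftInv (rvCdf P X)) = rvSurv P X := by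
  have := Measure.isProbabilityMeasure_map hX
  ext x
  rw [rvSurv_eq_one_sub_rvCdf hX, rvCdf_eq_cdf_map hX, rvSurv_leftInv_cdf]

lemma countable_leftInv_rvCdf_one_sub_ne [IsProbabilityMeasure P] (hX : Measurable X) {m : ℝ}
    (hsym : ∀ x, P {ω | X ω ≤ m - x} = P {ω | m + x ≤ X ω}) :
    {u ∈ Ioo (0:ℝ) 1 | leftInv (rvCdf P X) (1 - u) ≠ 2 * m - leftInv (rvCdf P X) u}.Countable := by
  have := Measure.isProbabilityMeasure_map (μ := P) hX.aemeasurable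
  rw [rvCdf_eq_cdf_map hX.aemeasurable]
  refine countable_leftInv_cdf_one_sub_ne _ fun x => ?_
  rw [Measure.map_apply hX measurableSet_Iic, Measure.map_apply hX measurableSet_Ici]
  exact hsym x

lemma DispLE.monotoneOn_leftInv_sub {Y : Ω → ℝ} (h : DispLE P X Y) :
    MonotoneOn (fun u => leftInv (rvCdf P Y) u - leftInv (rvCdf P X) u) (Ioo 0 1) :=
  fun u hu v hv huv => by linarith [h v u hu.1 huv hv.2]

lemma rvSurv_comp_of_isUniform01 {U : Ω → ℝ} {h : ℝ → ℝ} (hU : IsUniform01 P U)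
    (hh : AEMeasurable h 𝕌) : rvSurv P (h ∘ U) = rvSurv 𝕌 h := by
  have hmap : P.map U = 𝕌 := hU.2.trans (Measure.restrict_congr_set Ioo_ae_eq_Icc).symm
  rw [rvSurv_comp hU.1.aemeasurable (hmap ▸ hh), hmap]

lemma rvSurv_cmSum [IsProbabilityMeasure P] {X₁ X₂ U : Ω → ℝ} {m : ℝ} (hU : IsUniform01 P U)
    (hX₂ : Measurable X₂) (hsym : ∀ x, P {ω | X₂ ω ≤ m - x} = P {ω | m + x ≤ X₂ ω})
    (hmono : MonotoneOn (fun u => leftInv (rvCdf P X₁) u - leftInv (rvCdf P X₂) u + 2 * m)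
      (Ioo 0 1)) :
    rvSurv P (cmSum P X₁ X₂ U) =
      rvSurv 𝕌 (fun u => leftInv (rvCdf P X₁) u - leftInv (rvCdf P X₂) u + 2 * m) := by
  have hae : (fun u => leftInv (rvCdf P X₁) u + leftInv (rvCdf P X₂) (1 - u)) =ᵐ[𝕌]
      fun u => leftInv (rvCdf P X₁) u - leftInv (rvCdf P X₂) u + 2 * m := by
    rw [EventuallyEq, ae_restrict_iff' measurableSet_Ioo]
    filter_upwards [measure_eq_zero_iff_ae_notMem.1
      ((countable_leftInv_rvCdf_one_sub_ne hX₂ hsym).measure_zero volume)] with u hu hu₀₁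
    by_contra hne
    exact hu ⟨hu₀₁, fun h => hne (by rw [h]; ring)⟩
  exact (rvSurv_comp_of_isUniform01 hU ((aemeasurable_restrict_of_monotoneOn measurableSet_Ioo
    hmono).congr hae.symm)).trans (rvSurv_congr_ae hae)

end RandomVariable

theorem cm_sum_WT_general
    (P : Measure Ω) [IsProbabilityMeasure P]
    (X₁ X₂ U : Ω → ℝ) (hX₁ : Measurable X₁) (hX₂ : Measurable X₂)
    (hU : IsUniform01 P U)
    (hsym₂ : IsSymmetricRV P X₂)
    (hdisp : DispLE P X₂ X₁)
    (p : ℝ) (hp : p ∈ Ioo (0:ℝ) 1)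
    (hfinS : RhoFinite P (wangG p) (cmSum P X₁ X₂ U))
    (hfin₁ : RhoFinite P (wangG p) X₁)
    (hfin₂ : RhoFinite P (wangG (1 - p)) X₂) :
    WT P (cmSum P X₁ X₂ U) p = WT P X₁ p + WT P X₂ (1 - p)     := by
  obtain ⟨m, hm⟩ := hsym₂
  set q₁ := leftInv (rvCdf P X₁)
  set q₂ := leftInv (rvCdf P X₂)
  have hp' : 1 - p ∈ Ioo (0:ℝ) 1 := ⟨sub_pos.2 hp.2, sub_lt_self _ hp.1⟩
  have hmono : MonotoneOn (fun u => q₁ u - q₂ u + 2 * m) (Ioo 0 1) := fun u hu v hv huv =>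
    add_le_add_left (hdisp.monotoneOn_leftInv_sub hu hv huv) _
  obtain ⟨hiS, hWS⟩ :=
    integrable_and_WT_eq_integral hmono (rvSurv_cmSum hU hX₂ hm hmono) hp hfinS
  obtain ⟨hi₁, hW₁⟩ := integrable_and_WT_eq_integral (monotoneOn_leftInv_rvCdf hX₁.aemeasurable)
    (rvSurv_leftInv_rvCdf hX₁.aemeasurable).symm hp hfin₁
  obtain ⟨-, hW₂⟩ := integrable_and_WT_eq_integral (monotoneOn_leftInv_rvCdf hX₂.aemeasurable)
    (rvSurv_leftInv_rvCdf hX₂.aemeasurable).symm hp' hfin₂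
  have hi₂ : Integrable (fun u => 2 * m - q₂ (wangG p u)) 𝕌 :=
    (hiS.sub hi₁).congr (ae_of_all _ fun u => by simp only [Pi.sub_apply]; ring)
  rw [hWS, hW₁, hW₂, ← integral_two_mul_sub_comp_wangG hp
    (countable_leftInv_rvCdf_one_sub_ne hX₂ hm), ← integral_add hi₁ hi₂]
  refine setIntegral_congr_fun measurableSet_Ioo fun u _ => ?_
  ring

/-- Wang transform risk measure decomposition of the counter-monotonic sum. -/
theorem cm_sum_WT
    (P : Measure Ω) [IsProbabilityMeasure P]
    (X₁ X₂ U : Ω → ℝ) (hX₁ : Measurable X₁) (hX₂ : Measurable X₂)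
    (hU : IsUniform01 P U)
    (hsym₁ : IsSymmetricRV P X₁) (hsym₂ : IsSymmetricRV P X₂)
    (hreg₁ : CdfRegular P X₁) (hreg₂ : CdfRegular P X₂)
    (hdisp : DispLE P X₂ X₁)
    (p : ℝ) (hp : p ∈ Ioo (0:ℝ) 1)
    (hfinS : RhoFinite P (wangG p) (cmSum P X₁ X₂ U))
    (hfin₁ : RhoFinite P (wangG p) X₁)
    (hfin₂ : RhoFinite P (wangG (1 - p)) X₂) :
    WT P (cmSum P X₁ X₂ U) p = WT P X₁ p + WT P X₂ (1 - p) :=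
  cm_sum_WT_general P X₁ X₂ U hX₁ hX₂ hU hsym₂ hdisp p hp hfinS hfin₁ hfin₂

end
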